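/- Define, for t > 0, g(t) = (−8π sinh(π/t) + 8t cosh(π/t) + πt(cosh(2π/t) − 3)) / (128π t⁴ cosh³(π/t)). Then lim_{t→0⁺} t³ · e^{π/t} · g(t) = 1/32. Equivalently, the heat kernel of the non-isotropic bi-Heisenberg group (α₁ = 1, α₂ = 1/2) at the cut point ζ = (0,0,0,0,1), where d(0,ζ)² = 4π, satisfies g(t) = t^{−3} e^{−d²(0,ζ)/(4t)} φ(t) with φ(t) → 1/32 as t → 0⁺. -/

import Mathlib

/-!
With `q = e^{-π/t}` one has `cosh (π/t) = (q⁻¹ + q)/2`, `sinh (π/t) = (q⁻¹ - q)/2` and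
`cosh (2π/t) = (q⁻² + q²)/2`, so after multiplying by `t³ e^{π/t}` all growing exponentials cancel
and `t³ e^{π/t} g(t)` becomes a rational function of `q` and `q/t`, regular at the origin.
Both `q` and `q/t` tend to `0` as `t → 0⁺`, and the value of that rational function at `(0, 0)`
is `(π/2) / (16π) = 1/32`.
-/

open Real Filter

/-- The bi-Heisenberg heat kernel (non-isotropic case `α₁ = 1`, `α₂ = 1/2`) at the cut point
`ζ = (0,0,0,0,1)` on the vertical axis, as a function of time `t > 0`. -/
noncomputable def g (t : ℝ) : ℝ :=
  (-8 * Real.pi * Real.sinh (Real.pi / t) + 8 * t * Real.cosh (Real.pi / t) +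
      Real.pi * t * (Real.cosh (2 * Real.pi / t) - 3)) /
    (128 * Real.pi * t ^ 4 * Real.cosh (Real.pi / t) ^ 3)

open Topology

theorem tendsto_exp_neg_div_div_pow_nhdsGT_zero {c : ℝ} (hc : 0 < c) (n : ℕ) :
    Tendsto (fun t => exp (-(c / t)) / t ^ n) (𝓝[>] 0) (𝓝 0) := by
  have hct : Tendsto (fun t => c / t) (𝓝[>] 0) atTop :=
    tendsto_inv_nhdsGT_zero.const_mul_atTop hc
  have := ((tendsto_pow_mul_exp_neg_atTop_nhds_zero n).comp hct).const_mul (c⁻¹ ^ n)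
  rw [mul_zero] at this
  refine this.congr' ?_
  filter_upwards [self_mem_nhdsWithin] with t (ht : 0 < t)
  simp only [Function.comp_apply, div_pow, inv_pow]
  field_simp

lemma sinh_eq_exp_neg (x : ℝ) : sinh x = ((exp (-x))⁻¹ - exp (-x)) / 2 := by
  simp only [sinh_eq, exp_neg, inv_inv]

lemma cosh_eq_exp_neg (x : ℝ) : cosh x = ((exp (-x))⁻¹ + exp (-x)) / 2 := by
  simp only [cosh_eq, exp_neg, inv_inv]

lemma cosh_two_mul_eq_exp_neg (x : ℝ) : cosh (2 * x) = ((exp (-x) ^ 2)⁻¹ + exp (-x) ^ 2) / 2 := by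
  simp only [cosh_eq, exp_neg, two_mul, exp_add, inv_inv, mul_inv, sq]

lemma exp_eq_inv_exp_neg (x : ℝ) : exp x = (exp (-x))⁻¹ := by rw [exp_neg, inv_inv]

noncomputable def cutPointProfile (q r : ℝ) : ℝ :=
  (π * (1 - 6 * q ^ 2 + q ^ 4) / 2 + 4 * q * (1 + q ^ 2) - 4 * π * (1 - q ^ 2) * r) /
    (16 * π * (1 + q ^ 2) ^ 3)

lemma continuous_cutPointProfile : Continuous fun p : ℝ × ℝ => cutPointProfile p.1 p.2 := by
  unfold cutPointProfile
  fun_prop (disch := intro; positivity)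

lemma cutPointProfile_zero : cutPointProfile 0 0 = 1 / 32 := by
  rw [cutPointProfile]
  field_simp
  ring

lemma pow_three_mul_exp_mul_g_eq_cutPointProfile {t : ℝ} (ht : t ≠ 0) :
    t ^ 3 * exp (π / t) * g t = cutPointProfile (exp (-(π / t))) (exp (-(π / t)) / t) := by
  have hq : 0 < exp (-(π / t)) := exp_pos _
  rw [g, cutPointProfile, sinh_eq_exp_neg, cosh_eq_exp_neg, mul_div_assoc, cosh_two_mul_eq_exp_neg,
    exp_eq_inv_exp_neg]
  field_simp
  ring

/-- Small-time asymptotics at the cut point in the non-isotropic case: since `d(0,ζ)² = 4π`,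
one has `g(t) = t⁻³ e^{−d²(0,ζ)/(4t)} φ(t)` with `φ(t) = t³ e^{π/t} g(t) → 1/32`
as `t → 0⁺`. -/
theorem heat_kernel_asymptotics_nonisotropic :
    Tendsto (fun t : ℝ => t ^ 3 * Real.exp (Real.pi / t) * g t)
      (nhdsWithin 0 (Set.Ioi 0)) (nhds (1 / 32)) := by
  have hq := tendsto_exp_neg_div_div_pow_nhdsGT_zero pi_pos 0
  have hr := tendsto_exp_neg_div_div_pow_nhdsGT_zero pi_pos 1
  simp only [pow_zero, div_one, pow_one] at hq hr
  have h := (continuous_cutPointProfile.tendsto (0, 0)).comp (hq.prodMk_nhds hr)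
  rw [cutPointProfile_zero] at h
  refine h.congr' ?_
  filter_upwards [self_mem_nhdsWithin] with t (ht : 0 < t)
  exact (pow_three_mul_exp_mul_g_eq_cutPointProfile ht.ne').symm
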